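/- arXiv:1902.00850 — 2 statements merged into one kernel-verified Lean document; each statement's English description precedes it below -/
import Mathlib

section
/- Let 0 < α < 1. For a continuous function φ : [0,t] → ℝ, Q_1^α(φ,t) ≤ 2 t^α ∫_0^t φ(s)^2 ds, where Q_1^α(φ,t) = ∫_0^t φ(s)(I^α φ)(s) ds. -/
open MeasureTheory

noncomputable def omega (μ t : ℝ) : ℝ := t ^ (μ - 1) / Real.Gamma μ

noncomputable def RL (μ : ℝ) (φ : ℝ → ℝ) (t : ℝ) : ℝ :=
  ∫ s in (0:ℝ)..t, omega μ (t - s) * φ s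

noncomputable def Q1 (α : ℝ) (φ : ℝ → ℝ) (t : ℝ) : ℝ :=
  ∫ s in (0:ℝ)..t, φ s * RL α φ s

/-!
Writing `I^α φ(s) = ∫₀ˢ ω_α(s - u) φ(u) du` with `ω_α ≥ 0` and bounding
`φ(s) φ(u) ≤ (φ(s)² + φ(u)²) / 2` splits `Q_1^α(φ, t)` into two halves. The first is at most
`½ ω_{α+1}(t) ∫₀ᵗ φ²` because `∫₀ˢ ω_α = ω_{α+1}(s)`. The second is `½ ∫₀ᵗ I^α(φ²)`; extending
kernel and `φ²` by zero outside `[0, t]` makes `I^α(φ²)` a convolution on `ℝ`, whose integral is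
`(∫₀ᵗ ω_α) (∫₀ᵗ φ²)`, so this half obeys the same bound. Finally
`ω_{α+1}(t) = (α + 1) t^α / Γ(α + 2) ≤ 2 t^α`, as `Γ ≥ 1` on `[2, ∞)`.
-/

open Real Set
open scoped Convolution

lemma omega_nonneg {μ v : ℝ} (hμ : 0 < μ) (hv : 0 ≤ v) : 0 ≤ omega μ v :=
  div_nonneg (rpow_nonneg hv _) (Gamma_pos_of_pos hμ).le

lemma omega_monotoneOn {μ : ℝ} (hμ : 1 ≤ μ) : MonotoneOn (omega μ) (Ici 0) :=
  fun _ hs _ _ hst => div_le_div_of_nonneg_right (rpow_le_rpow hs hst (by linarith))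
    (Gamma_pos_of_pos (by linarith)).le

lemma omega_add_one_le_two_mul_rpow {α t : ℝ} (hα0 : 0 ≤ α) (hα1 : α ≤ 1) (ht : 0 ≤ t) :
    omega (α + 1) t ≤ 2 * t ^ α := by
  have hΓ : 1 ≤ Gamma (α + 2) := Gamma_two ▸
    Gamma_strictMonoOn_Ici.monotoneOn self_mem_Ici (mem_Ici.mpr (by linarith)) (by linarith)
  have hΓ' : Gamma (α + 2) = (α + 1) * Gamma (α + 1) := by
    rw [show α + 2 = α + 1 + 1 by ring, Gamma_add_one (by linarith)]
  have hpos : 0 < Gamma (α + 1) := Gamma_pos_of_pos (by linarith)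
  have hΓ2 : 1 ≤ 2 * Gamma (α + 1) := by nlinarith
  rw [omega, add_sub_cancel_right, div_le_iff₀ hpos]
  nlinarith [rpow_nonneg ht α]

lemma integral_omega {μ : ℝ} (hμ : 0 < μ) (s : ℝ) :
    ∫ v in (0:ℝ)..s, omega μ v = omega (μ + 1) s := by
  simp only [omega, intervalIntegral.integral_div]
  rw [integral_rpow (Or.inl (by linarith)), sub_add_cancel, add_sub_cancel_right,
    zero_rpow hμ.ne', sub_zero, Gamma_add_one hμ.ne', div_div]

lemma integral_omega_sub {μ : ℝ} (hμ : 0 < μ) (s : ℝ) :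
    ∫ u in (0:ℝ)..s, omega μ (s - u) = omega (μ + 1) s := by
  rw [intervalIntegral.integral_comp_sub_left, sub_self, sub_zero, integral_omega hμ]

lemma intervalIntegrable_omega_sub_mul {μ s : ℝ} (hμ : 0 < μ) (hs : 0 ≤ s) {g : ℝ → ℝ}
    (hg : ContinuousOn g (Icc 0 s)) :
    IntervalIntegrable (fun u => omega μ (s - u) * g u) volume 0 s := by
  have hker : IntervalIntegrable (omega μ) volume 0 s :=
    (intervalIntegral.intervalIntegrable_rpow' (by linarith)).div_const _
  have := hker.comp_sub_left s
  rw [sub_self, sub_zero] at this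
  exact this.symm.mul_continuousOn (by rwa [uIcc_of_le hs])

lemma mul_RL_le {μ s : ℝ} (hμ : 0 < μ) (hs : 0 ≤ s) {φ : ℝ → ℝ}
    (hφ : ContinuousOn φ (Icc 0 s)) :
    φ s * RL μ φ s ≤ omega (μ + 1) s * φ s ^ 2 / 2 + RL μ (fun u => φ u ^ 2) s / 2 := by
  have hφ2 : ContinuousOn (fun u => φ u ^ 2 / 2) (Icc 0 s) := (hφ.pow 2).div_const 2
  calc φ s * RL μ φ s = ∫ u in (0:ℝ)..s, omega μ (s - u) * (φ s * φ u) := by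
        rw [RL, ← intervalIntegral.integral_const_mul]
        congr 1 with u
        ring
    _ ≤ ∫ u in (0:ℝ)..s,
          omega μ (s - u) * (φ s ^ 2 / 2) + omega μ (s - u) * (φ u ^ 2 / 2) := by
        refine intervalIntegral.integral_mono_on hs
          (intervalIntegrable_omega_sub_mul hμ hs (continuousOn_const.mul hφ))
          ((intervalIntegrable_omega_sub_mul hμ hs continuousOn_const).add
            (intervalIntegrable_omega_sub_mul hμ hs hφ2)) fun u hu => ?_
        rw [← mul_add]
        exact mul_le_mul_of_nonneg_left (by nlinarith [sq_nonneg (φ s - φ u)])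
          (omega_nonneg hμ (by linarith [hu.2]))
    _ = omega (μ + 1) s * φ s ^ 2 / 2 + RL μ (fun u => φ u ^ 2) s / 2 := by
        rw [intervalIntegral.integral_add
          (intervalIntegrable_omega_sub_mul hμ hs continuousOn_const)
          (intervalIntegrable_omega_sub_mul hμ hs hφ2), intervalIntegral.integral_mul_const,
          integral_omega_sub hμ, RL, ← intervalIntegral.integral_div]
        simp only [mul_div_assoc]

section Convolution

variable {μ t : ℝ} {g : ℝ → ℝ}

lemma RL_eq_convolution (μ : ℝ) (g : ℝ → ℝ) {s : ℝ} (hs : s ∈ Icc 0 t) :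
    RL μ g s =
      ((Ioc 0 t).indicator (omega μ) ⋆[ContinuousLinearMap.mul ℝ ℝ] (Icc 0 t).indicator g) s := by
  have hsub := intervalIntegral.integral_comp_sub_left (a := 0) (b := s)
    (fun v => omega μ v * g (s - v)) s
  simp only [sub_sub_cancel, sub_self, sub_zero] at hsub
  rw [convolution_mul, ← setIntegral_eq_integral_of_forall_compl_eq_zero (s := Ioc 0 s), RL,
    hsub, intervalIntegral.integral_of_le hs.1]
  · refine setIntegral_congr_fun measurableSet_Ioc fun v hv => ?_
    rw [indicator_of_mem (s := Ioc 0 t) ⟨hv.1, hv.2.trans hs.2⟩,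
      indicator_of_mem (s := Icc 0 t) ⟨by linarith [hv.2], by linarith [hv.1, hs.2]⟩]
  · intro v hv
    rcases le_or_gt v 0 with hv0 | hv0
    · rw [indicator_of_notMem fun h => (not_lt.mpr hv0) h.1, zero_mul]
    · rw [indicator_of_notMem (s := Icc 0 t) fun h => hv ⟨hv0, by linarith [h.1]⟩, mul_zero]

lemma integrable_indicator_omega (hμ : 0 < μ) (ht : 0 ≤ t) :
    Integrable ((Ioc 0 t).indicator (omega μ)) :=
  ((intervalIntegrable_iff_integrableOn_Ioc_of_le ht).mp
    ((intervalIntegral.intervalIntegrable_rpow' (by linarith)).div_const _)).integrable_indicator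
      measurableSet_Ioc

lemma intervalIntegrable_RL (hμ : 0 < μ) (ht : 0 ≤ t) (hg : IntegrableOn g (Icc 0 t)) :
    IntervalIntegrable (RL μ g) volume 0 t := by
  rw [intervalIntegrable_iff_integrableOn_Ioc_of_le ht]
  refine (((integrable_indicator_omega hμ ht).integrable_convolution _
    (hg.integrable_indicator measurableSet_Icc)).integrableOn).congr_fun
    (fun s hs => (RL_eq_convolution μ g (Ioc_subset_Icc_self hs)).symm) measurableSet_Ioc

lemma integral_RL_le (hμ : 0 < μ) (ht : 0 ≤ t) (hg0 : ∀ u ∈ Icc 0 t, 0 ≤ g u)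
    (hg : IntegrableOn g (Icc 0 t)) :
    ∫ s in (0:ℝ)..t, RL μ g s ≤ omega (μ + 1) t * ∫ s in (0:ℝ)..t, g s := by
  set w := (Ioc 0 t).indicator (omega μ)
  set ψ := (Icc 0 t).indicator g
  have hw := integrable_indicator_omega hμ ht
  have hψ : Integrable ψ := hg.integrable_indicator measurableSet_Icc
  have hconv0 : 0 ≤ w ⋆[ContinuousLinearMap.mul ℝ ℝ] ψ := fun x =>
    integral_nonneg fun v => mul_nonneg
      (indicator_nonneg (fun v hv => omega_nonneg hμ hv.1.le) v)
      (indicator_nonneg hg0 (x - v))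
  calc ∫ s in (0:ℝ)..t, RL μ g s
      = ∫ s in Ioc 0 t, (w ⋆[ContinuousLinearMap.mul ℝ ℝ] ψ) s := by
        rw [intervalIntegral.integral_of_le ht]
        exact setIntegral_congr_fun measurableSet_Ioc
          fun s hs => RL_eq_convolution μ g (Ioc_subset_Icc_self hs)
    _ ≤ ∫ s, (w ⋆[ContinuousLinearMap.mul ℝ ℝ] ψ) s :=
        setIntegral_le_integral (hw.integrable_convolution _ hψ) (.of_forall hconv0)
    _ = (∫ v, w v) * ∫ u, ψ u := integral_convolution _ hw hψ
    _ = omega (μ + 1) t * ∫ s in (0:ℝ)..t, g s := by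
        rw [integral_indicator measurableSet_Ioc, integral_indicator measurableSet_Icc,
          integral_Icc_eq_integral_Ioc, ← intervalIntegral.integral_of_le ht,
          ← intervalIntegral.integral_of_le ht, integral_omega hμ]

end Convolution

theorem stmt_4 (α t : ℝ) (hα0 : 0 < α) (hα1 : α < 1) (ht : 0 ≤ t)
    (φ : ℝ → ℝ) (hφ : ContinuousOn φ (Set.Icc 0 t)) :
    Q1 α φ t ≤ 2 * t ^ α * ∫ s in (0:ℝ)..t, (φ s) ^ 2 := by
  have hI : 0 ≤ ∫ s in (0:ℝ)..t, φ s ^ 2 :=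
    intervalIntegral.integral_nonneg ht fun u _ => sq_nonneg (φ u)
  -- `Q1` is a Bochner integral, hence `0` when its integrand is not integrable.
  by_cases hQ : IntervalIntegrable (fun s => φ s * RL α φ s) volume 0 t
  swap
  · rw [Q1, intervalIntegral.integral_undef hQ]
    positivity
  have hφ2 : ContinuousOn (fun s => φ s ^ 2) (Icc 0 t) := hφ.pow 2
  have hfirst : IntervalIntegrable (fun s => omega (α + 1) t * φ s ^ 2 / 2) volume 0 t :=
    ((hφ2.intervalIntegrable_of_Icc ht).const_mul _).div_const _
  have hsecond : IntervalIntegrable (fun s => RL α (fun u => φ u ^ 2) s / 2) volume 0 t :=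
    (intervalIntegrable_RL hα0 ht hφ2.integrableOn_Icc).div_const _
  have hRL := integral_RL_le hα0 ht (fun u _ => sq_nonneg (φ u)) hφ2.integrableOn_Icc
  calc Q1 α φ t
      ≤ ∫ s in (0:ℝ)..t, omega (α + 1) t * φ s ^ 2 / 2 + RL α (fun u => φ u ^ 2) s / 2 := by
        refine intervalIntegral.integral_mono_on ht hQ (hfirst.add hsecond) fun s hs => ?_
        have hmono := omega_monotoneOn (μ := α + 1) (by linarith) hs.1 ht hs.2
        have := mul_RL_le hα0 hs.1 (hφ.mono (Icc_subset_Icc_right hs.2))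
        nlinarith [sq_nonneg (φ s)]
    _ = omega (α + 1) t * (∫ s in (0:ℝ)..t, φ s ^ 2) / 2
          + (∫ s in (0:ℝ)..t, RL α (fun u => φ u ^ 2) s) / 2 := by
        rw [intervalIntegral.integral_add hfirst hsecond, intervalIntegral.integral_div,
          intervalIntegral.integral_div, intervalIntegral.integral_const_mul]
    _ ≤ omega (α + 1) t * ∫ s in (0:ℝ)..t, φ s ^ 2 := by linarith
    _ ≤ 2 * t ^ α * ∫ s in (0:ℝ)..t, φ s ^ 2 :=
        mul_le_mul_of_nonneg_right (omega_add_one_le_two_mul_rpow hα0.le hα1.le ht) hI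
end

section
/- Let 0 < α < 1 and let u : [0,T] → ℝ be continuously differentiable. Then t ∂_t^{1-α} u(t) = I^α(M u' + α u)(t), i.e., t · d/dt (I^α u)(t) = ∫_0^t ω_α(t-s)(s u'(s) + α u(s)) ds, for all t ∈ (0,T]. -/
/-!
The substitution `s = t σ` turns `I^α u (t)` into `t ^ α * ∫₀¹ ω_α(1 - σ) u(t σ) dσ`, a power of
`t` times an integral over a fixed interval, which may be differentiated under the integral sign.
The product rule then gives `α t^(α-1) · (…) + t^α ∫₀¹ ω_α(1 - σ) σ u'(t σ) dσ`; after
multiplying by `t` and substituting back, the two terms are `α I^α u (t)` and `I^α (M u') (t)`.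
-/

open MeasureTheory

open Set Filter Topology

lemma intervalIntegrable_omega_sub {μ : ℝ} (hμ : 0 < μ) (a b : ℝ) :
    IntervalIntegrable (fun s => omega μ (b - s)) volume a b := by
  have h := (intervalIntegral.intervalIntegrable_rpow' (r := μ - 1) (a := b - a) (b := 0)
    (by linarith)).comp_sub_left b
  simp only [sub_sub_cancel, sub_zero] at h
  exact h.div_const _

lemma omega_sub_mul {μ t σ : ℝ} (ht : 0 ≤ t) (hσ : σ ≤ 1) :
    omega μ (t - t * σ) = t ^ (μ - 1) * omega μ (1 - σ) := by
  rw [omega, omega, show t - t * σ = t * (1 - σ) by ring,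
    Real.mul_rpow ht (sub_nonneg.2 hσ), mul_div_assoc]

lemma RL_eq_rpow_mul_integral (μ : ℝ) (φ : ℝ → ℝ) {t : ℝ} (ht : 0 < t) :
    RL μ φ t = t ^ μ * ∫ σ in (0:ℝ)..1, omega μ (1 - σ) * φ (t * σ) := by
  calc RL μ φ t = t * ∫ σ in (0:ℝ)..1, omega μ (t - t * σ) * φ (t * σ) := by
        rw [intervalIntegral.integral_comp_mul_left (fun s => omega μ (t - s) * φ s) ht.ne',
          mul_zero, mul_one, smul_eq_mul, mul_inv_cancel_left₀ ht.ne', RL]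
    _ = t * ∫ σ in (0:ℝ)..1, t ^ (μ - 1) * (omega μ (1 - σ) * φ (t * σ)) := by
        congr 1
        refine intervalIntegral.integral_congr fun σ hσ => ?_
        rw [uIcc_of_le zero_le_one] at hσ
        rw [omega_sub_mul ht.le hσ.2, mul_assoc]
    _ = t ^ μ * ∫ σ in (0:ℝ)..1, omega μ (1 - σ) * φ (t * σ) := by
        rw [intervalIntegral.integral_const_mul, ← mul_assoc, Real.rpow_sub_one ht.ne',
          mul_div_cancel₀ _ ht.ne']

lemma RL_add {μ : ℝ} (hμ : 0 < μ) {φ ψ : ℝ → ℝ} (hφ : Continuous φ) (hψ : Continuous ψ)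
    (t : ℝ) : RL μ (fun s => φ s + ψ s) t = RL μ φ t + RL μ ψ t := by
  simp only [RL, mul_add]
  exact intervalIntegral.integral_add
    ((intervalIntegrable_omega_sub hμ 0 t).mul_continuousOn hφ.continuousOn)
    ((intervalIntegrable_omega_sub hμ 0 t).mul_continuousOn hψ.continuousOn)

lemma RL_const_mul (μ c : ℝ) (φ : ℝ → ℝ) (t : ℝ) :
    RL μ (fun s => c * φ s) t = c * RL μ φ t := by
  simp only [RL, mul_left_comm _ c, intervalIntegral.integral_const_mul]

lemma hasDerivAt_integral_mul_comp_mul {k u : ℝ → ℝ} {a b : ℝ}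
    (hk : IntervalIntegrable k volume a b) (hu : ContDiff ℝ 1 u) (t : ℝ) :
    HasDerivAt (fun x => ∫ σ in a..b, k σ * u (x * σ))
      (∫ σ in a..b, k σ * (σ * deriv u (t * σ))) t := by
  have hu0 : Continuous u := hu.continuous
  have hu' : Continuous (deriv u) := hu.continuous_deriv le_rfl
  obtain ⟨C, hC⟩ : ∃ C, ∀ p ∈ Metric.closedBall t 1 ×ˢ uIcc a b,
      ‖p.2 * deriv u (p.1 * p.2)‖ ≤ C :=
    ((isCompact_closedBall t 1).prod isCompact_uIcc).exists_bound_of_continuousOn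
      (by fun_prop)
  have hF : ∀ x, IntervalIntegrable (fun σ => k σ * u (x * σ)) volume a b := fun x =>
    hk.mul_continuousOn (by fun_prop)
  have hF' : IntervalIntegrable (fun σ => k σ * (σ * deriv u (t * σ))) volume a b :=
    hk.mul_continuousOn (g := fun σ => σ * deriv u (t * σ)) (by fun_prop)
  refine (intervalIntegral.hasDerivAt_integral_of_dominated_loc_of_deriv_le
    (F' := fun x σ => k σ * (σ * deriv u (x * σ))) (bound := fun σ => ‖k σ‖ * C)
    (Metric.ball_mem_nhds t one_pos)
    (Eventually.of_forall fun x => (hF x).aestronglyMeasurable_restrict_uIoc) (hF t)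
    hF'.aestronglyMeasurable_restrict_uIoc ?_ (hk.norm.mul_const C) ?_).2
  · refine ae_of_all _ fun σ hσ x hx => ?_
    rw [norm_mul]
    exact mul_le_mul_of_nonneg_left
      (hC (x, σ) ⟨Metric.ball_subset_closedBall hx, uIoc_subset_uIcc hσ⟩) (norm_nonneg _)
  · refine ae_of_all _ fun σ _ x _ => ?_
    have hcomp := ((hu.differentiable one_ne_zero) (x * σ)).hasDerivAt.comp x
      (hasDerivAt_mul_const σ)
    exact (hcomp.const_mul (k σ)).congr_deriv (by rw [mul_comm σ])

theorem stmt_15_general (α T : ℝ) (hα0 : 0 < α)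
    (u : ℝ → ℝ) (hu : ContDiff ℝ 1 u) :
    ∀ t ∈ Set.Ioc (0:ℝ) T,
      t * deriv (RL α u) t = RL α (fun s => s * deriv u s + α * u s) t := by
  rintro t ⟨ht, -⟩
  have hu' : Continuous (deriv u) := hu.continuous_deriv le_rfl
  have hJ := hasDerivAt_integral_mul_comp_mul (intervalIntegrable_omega_sub hα0 0 1) hu t
  have hRpow : HasDerivAt (fun x : ℝ => x ^ α) (α * t ^ (α - 1)) t :=
    Real.hasDerivAt_rpow_const (Or.inl ht.ne')
  have hD := (hRpow.mul hJ).congr_of_eventuallyEq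
    (eventually_gt_nhds ht |>.mono fun r hr => RL_eq_rpow_mul_integral α u hr)
  have hM : RL α (fun s => s * deriv u s) t
      = t ^ α * (t * ∫ σ in (0:ℝ)..1, omega α (1 - σ) * (σ * deriv u (t * σ))) := by
    rw [RL_eq_rpow_mul_integral _ _ ht, ← intervalIntegral.integral_const_mul t]
    congr 1
    exact intervalIntegral.integral_congr fun σ _ => by ring
  have hRpowMul : t * t ^ (α - 1) = t ^ α := by
    rw [Real.rpow_sub_one ht.ne', mul_div_cancel₀ _ ht.ne']
  rw [hD.deriv, RL_add hα0 (by fun_prop) (by fun_prop), RL_const_mul, hM,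
    RL_eq_rpow_mul_integral α u ht]
  linear_combination (α * ∫ σ in (0:ℝ)..1, omega α (1 - σ) * u (t * σ)) * hRpowMul

/-- `t ∂_t^{1-α} u(t) = I^α (M u' + α u)(t)`. -/
theorem stmt_15 (α T : ℝ) (hα0 : 0 < α) (hα1 : α < 1) (hT : 0 < T)
    (u : ℝ → ℝ) (hu : ContDiff ℝ 1 u) :
    ∀ t ∈ Set.Ioc (0:ℝ) T,
      t * deriv (RL α u) t = RL α (fun s => s * deriv u s + α * u s) t :=
  stmt_15_general α T hα0 u hu
end
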